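/- Let A = [[−d_M, 0],[k_P, −d_P]] with d_M, d_P > 0, k_P ≥ 0, and Q̄ = 2 k_M μ · diag(1, k_P/d_M) with k_M, μ ≥ 0. Then the unique symmetric solution Σ of 0 = AΣ + ΣAᵀ + Q̄ is Σ = r_M μ · [[1, α],[α, r_P(1+α)]], where α = k_P/(d_M + d_P), r_P = k_P/d_P, r_M = k_M/d_M. -/
import Mathlib


open Matrix

/-- The unique symmetric solution of the 2×2 Lyapunov equation `0 = AΣ + ΣAᵀ + Q̄` for the
reporter model, with `A = [[−d_M,0],[k_P,−d_P]]` and `Q̄ = 2k_Mμ·diag(1, k_P/d_M)`, is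
`Σ = r_M μ [[1, α],[α, r_P(1+α)]]` where `α = k_P/(d_M+d_P)`, `r_P = k_P/d_P`,
`r_M = k_M/d_M`. -/
theorem stmt18 (kM dM kP dP μ : ℝ) (hdM : 0 < dM) (hdP : 0 < dP) (hkP : 0 ≤ kP)
    (hkM : 0 ≤ kM) (hμ : 0 ≤ μ) :
    ∀ S : Matrix (Fin 2) (Fin 2) ℝ,
      (S.IsSymm ∧
        0 = (!![-dM, 0; kP, -dP] : Matrix (Fin 2) (Fin 2) ℝ) * S +
            S * (!![-dM, 0; kP, -dP] : Matrix (Fin 2) (Fin 2) ℝ)ᵀ +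
            (2 * kM * μ) • Matrix.diagonal ![1, kP / dM]) ↔
      S = (kM / dM * μ) •
          !![1, kP / (dM + dP);
             kP / (dM + dP), kP / dP * (1 + kP / (dM + dP))] := by
  intro S
  have hdMP : dM + dP ≠ 0 := by positivity
  constructor
  · rintro ⟨hs, heq⟩
    have hcb : S 1 0 = S 0 1 := by
      have := congrFun (congrFun hs 0) 1
      simpa [Matrix.IsSymm, Matrix.transpose_apply] using this
    have h00 := congrFun (congrFun heq 0) 0
    have h01 := congrFun (congrFun heq 0) 1
    have h11 := congrFun (congrFun heq 1) 1
    simp [Matrix.mul_apply, Fin.sum_univ_two, Matrix.vecHead, Matrix.vecTail, Matrix.vecMul, dotProduct, Matrix.diagonal] at h00 h01 h11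
    have ha : S 0 0 = kM / dM * μ := by field_simp; linarith
    have hb : S 0 1 = kM / dM * μ * (kP / (dM + dP)) := by
      rw [ha] at h01; field_simp at h01 ⊢; nlinarith [h01]
    have hd : S 1 1 = kM / dM * μ * (kP / dP * (1 + kP / (dM + dP))) := by
      rw [hcb, hb] at h11; field_simp at h11 ⊢; nlinarith [h11]
    ext i j
    fin_cases i <;> fin_cases j <;>
      simp [ha, hb, hcb, hd] <;> ring
  · rintro rfl
    constructor
    · ext i j
      fin_cases i <;> fin_cases j <;> simp [Matrix.IsSymm, Matrix.transpose_apply]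
    · have hT : (!![-dM, 0; kP, -dP] : Matrix (Fin 2) (Fin 2) ℝ)ᵀ = !![-dM, kP; 0, -dP] := by
        ext i j; fin_cases i <;> fin_cases j <;> simp
      have hD : (Matrix.diagonal ![1, kP / dM] : Matrix (Fin 2) (Fin 2) ℝ) =
          !![1, 0; 0, kP / dM] := by
        ext i j; fin_cases i <;> fin_cases j <;> simp [Matrix.diagonal]
      rw [hT, hD, Matrix.mul_smul, Matrix.smul_mul, Matrix.mul_fin_two, Matrix.mul_fin_two]
      ext i j
      fin_cases i <;> fin_cases j <;>
        · simp
          field_simp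
          ring
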